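/- Let π be an ε-almost representation. Suppose there exist c > 0 and 0 < δ < c/2 such that ⟨d₁d₁*f, f⟩_{C¹} > c⟨f,f⟩_{C¹} for every f ∈ B¹(δ²/|T|). Then either there exists a nonzero u ∈ H with ‖π(s)u − u‖ < δ‖u‖ for all s ∈ S, or max_{s∈S} ‖π(s)u − u‖ ≥ (c/2)‖u‖ for every u ∈ H. -/

import Mathlib

open Finset ContinuousLinearMap

def edgeSet {G : Type*} [Group G] [DecidableEq G] (S : Finset G) : Finset (G × G) :=
  (S ×ˢ S).filter fun p => p.1⁻¹ * p.2 ∈ S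

def deg {G : Type*} [Group G] [DecidableEq G] (S : Finset G) (s : G) : ℕ :=
  (S.filter fun s' => s⁻¹ * s' ∈ S).card

def IsAlmostRep {G : Type*} [Group G] {H : Type*} [NormedAddCommGroup H]
    [InnerProductSpace ℂ H] [CompleteSpace H]
    (S : Finset G) (ε : ℝ) (π : G → H →L[ℂ] H) : Prop :=
  (∀ s ∈ S, π s ∈ unitary (H →L[ℂ] H)) ∧
  (∀ s ∈ S, π s⁻¹ = star (π s)) ∧
  ∀ s₁ ∈ S, ∀ s₂ ∈ S, s₁ * s₂ ∈ S → ‖π (s₁ * s₂) - (π s₁).comp (π s₂)‖ ≤ ε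

/-- `d₂ f ((s,s')) = f(s) − f(s') + π(s) f(s⁻¹s')`. -/
def d2 {G : Type*} [Group G] {H : Type*} [NormedAddCommGroup H] [InnerProductSpace ℂ H]
    (π : G → H →L[ℂ] H) (f : G → H) (p : G × G) : H :=
  f p.1 - f p.2 + π p.1 (f (p.1⁻¹ * p.2))

/-- The graph `L(S)`: vertices in `S`, with `s ∼ s'` iff `s, s', s⁻¹s' ∈ S` (and `s ≠ s'`). -/
def lGraph {G : Type*} [Group G] (S : Finset G) : SimpleGraph G where
  Adj s s' := s ∈ S ∧ s' ∈ S ∧ s⁻¹ * s' ∈ S ∧ s'⁻¹ * s ∈ S ∧ s ≠ s'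
  symm := by constructor; intro a b h; exact ⟨h.2.1, h.1, h.2.2.2.1, h.2.2.1, h.2.2.2.2.symm⟩
  loopless := by constructor; intro a h; exact h.2.2.2.2 rfl

/-- `μ` is an eigenvalue of the discrete Laplacian
`Δf(s) = f(s) − (1/deg s) ∑_{s'∼s} f(s')` of the graph `L(S)`. -/
def IsLapEig {G : Type*} [Group G] [DecidableEq G] (S : Finset G) (μ : ℝ) : Prop :=
  ∃ g : G → ℝ, (∃ s ∈ S, g s ≠ 0) ∧ ∀ s ∈ S,
    g s - ((deg S s : ℝ))⁻¹ * ∑ s' ∈ S.filter (fun t => s⁻¹ * t ∈ S), g s' = μ * g s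

/-- `d₁* f = −2 ∑_{s∈S} f(s) n(s)/|T|`. -/
noncomputable def d1star {G : Type*} [Group G] [DecidableEq G]
    {H : Type*} [NormedAddCommGroup H] [InnerProductSpace ℂ H]
    (S : Finset G) (f : G → H) : H :=
  (-(2 / ((edgeSet S).card : ℂ))) • ∑ s ∈ S, (deg S s : ℂ) • f s

/-!
Suppose no nonzero vector is `δ`-almost invariant. A generator of degree zero in `L(S)` then acts
trivially (the gap hypothesis applied to `d₁ x`, cut down to such generators, would read `0 < 0`),
and every other generator is paired with its inverse or has degree at least `2`. Hence every
nonzero `x` has `∑ₛ deg s ‖π s x - x‖² ≥ 2 δ² ‖x‖²`, i.e. Rayleigh quotient `> δ²/|T|` for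
`Δ = d₁* d₁`. Since `Δ ≤ δ²/|T|` on `ker P`, this forces `ker P = 0`.

On `range P = B⁰(δ²/|T|)` the gap hypothesis for `f = d₁ u` reads `‖Δ u‖² ≥ c ⟨Δ u, u⟩`; as `Δ` is
bounded below by `δ²/|T| > 0` there, the spectral theorem upgrades this to `Δ ≥ c`. But if
`‖π s u - u‖ < (c/2) ‖u‖` for all `s`, then `‖d₁*‖ ≤ 2` gives `‖Δ u‖ < c ‖u‖`, and
`c² ‖u‖² ≤ c ⟨Δ u, u⟩ ≤ ‖Δ u‖² < c² ‖u‖²`.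
-/

open RCLike

lemma algebraMap_le_of_smul_le_sq {A : Type*} [CStarAlgebra A] [PartialOrder A] [StarOrderedRing A]
    {b : A} {μ c : ℝ} (hb : IsSelfAdjoint b) (hμ : 0 < μ) (hμb : algebraMap ℝ A μ ≤ b)
    (hcb : c • b ≤ b ^ 2) : algebraMap ℝ A c ≤ b := by
  have hsq : b ^ 2 - c • b = cfc (fun x : ℝ => x ^ 2 - c * x) b := by
    rw [cfc_sub _ _ b, cfc_pow_id b 2, cfc_const_mul_id c b]
  have hspec : ∀ x ∈ spectrum ℝ b, 0 ≤ x ^ 2 - c * x := by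
    rw [← cfc_nonneg_iff _ b, ← hsq]
    exact sub_nonneg.mpr hcb
  rw [algebraMap_le_iff_le_spectrum hb] at hμb ⊢
  intro x hx
  nlinarith [hspec x hx, hμb x hx]

lemma ne_of_mul_norm_le_norm_sub {E : Type*} [NormedAddGroup E] {a x : E} {δ : ℝ} (hδ : 0 < δ)
    (hx : x ≠ 0) (h : δ * ‖x‖ ≤ ‖a - x‖) : a ≠ x := by
  rintro rfl
  rw [sub_self, norm_zero] at h
  exact h.not_gt (by positivity)

section Hilbert

variable {E : Type*} [NormedAddCommGroup E] [InnerProductSpace ℂ E]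

local notation "⟪" x ", " y "⟫" => inner ℂ x y

lemma re_inner_real_smul_left (r : ℝ) (u v : E) : re ⟪r • u, v⟫ = r * re ⟪u, v⟫ := by
  rw [RCLike.real_smul_eq_coe_smul (K := ℂ), inner_smul_left, conj_ofReal, re_ofReal_mul]

lemma ContinuousLinearMap.mul_add_smul_one_sub_apply (A P : E →L[ℂ] E) (c : ℝ) (x : E) :
    (A * P + c • (1 - P)) x = A (P x) + (c : ℂ) • (x - P x) := by
  simp only [add_apply, mul_apply_eq_comp, smul_apply, sub_apply, one_apply_eq_self,
    Complex.coe_smul]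

variable [CompleteSpace E]

lemma ContinuousLinearMap.le_iff_re_inner_le {a b : E →L[ℂ] E} (h : IsSelfAdjoint (b - a)) :
    a ≤ b ↔ ∀ x, re ⟪a x, x⟫ ≤ re ⟪b x, x⟫ := by
  simp [le_def, isPositive_def', h, reApplyInnerSelf_apply, inner_sub_left]

lemma ContinuousLinearMap.algebraMap_le_iff {b : E →L[ℂ] E} (hb : IsSelfAdjoint b) (r : ℝ) :
    algebraMap ℝ (E →L[ℂ] E) r ≤ b ↔ ∀ x, r * ‖x‖ ^ 2 ≤ re ⟪b x, x⟫ := by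
  simp only [le_iff_re_inner_le (hb.sub (IsSelfAdjoint.algebraMap _ (.all r))), algebraMap_apply,
    re_inner_real_smul_left, inner_self_eq_norm_sq]

lemma IsStarProjection.inner_apply_sub_apply {P : E →L[ℂ] E} (hP : IsStarProjection P)
    (a b : E) : ⟪P a, b - P b⟫ = 0 := by
  have hsymm : ∀ x y, ⟪P x, y⟫ = ⟪x, P y⟫ := hP.isSelfAdjoint.isSymmetric
  rw [inner_sub_right, hsymm, hsymm, ← mul_apply_eq_comp, hP.isIdempotentElem.eq, sub_self]

lemma IsStarProjection.norm_sq_eq_add {P : E →L[ℂ] E} (hP : IsStarProjection P) (x : E) :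
    ‖x‖ ^ 2 = ‖P x‖ ^ 2 + ‖x - P x‖ ^ 2 := by
  rw [← add_sub_cancel (P x) x, @norm_add_sq ℂ, hP.inner_apply_sub_apply, add_sub_cancel]
  simp

lemma IsStarProjection.inner_apply_apply_sub {A P : E →L[ℂ] E} (hP : IsStarProjection P)
    (hAP : Commute A P) (x : E) : ⟪A (P x), x - P x⟫ = 0 := by
  have hAPx : P (A (P x)) = A (P x) := by
    rw [← mul_apply_eq_comp, ← hAP.eq, mul_apply_eq_comp, ← mul_apply_eq_comp P,
      hP.isIdempotentElem.eq]
  rw [← hAPx]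
  exact hP.inner_apply_sub_apply _ _

lemma IsStarProjection.re_inner_mul_add_smul_one_sub_apply {A P : E →L[ℂ] E}
    (hP : IsStarProjection P) (hAP : Commute A P) (c : ℝ) (x : E) :
    re ⟪(A * P + c • (1 - P)) x, x⟫ = re ⟪A (P x), P x⟫ + c * ‖x - P x‖ ^ 2 := by
  have e1 : ⟪A (P x), x⟫ = ⟪A (P x), P x⟫ := by
    rw [← sub_eq_zero, ← inner_sub_right, hP.inner_apply_apply_sub hAP]
  have e2 : ⟪x - P x, x⟫ = ⟪x - P x, x - P x⟫ := by
    rw [← sub_eq_zero, ← inner_sub_right, sub_sub_cancel, ← inner_conj_symm,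
      hP.inner_apply_sub_apply, map_zero]
  rw [mul_add_smul_one_sub_apply, inner_add_left, Complex.coe_smul, map_add,
    re_inner_real_smul_left, e1, e2, inner_self_eq_norm_sq]

lemma IsStarProjection.norm_mul_add_smul_one_sub_apply_sq {A P : E →L[ℂ] E}
    (hP : IsStarProjection P) (hAP : Commute A P) (c : ℝ) (x : E) :
    ‖(A * P + c • (1 - P)) x‖ ^ 2 = ‖A (P x)‖ ^ 2 + c ^ 2 * ‖x - P x‖ ^ 2 := by
  rw [mul_add_smul_one_sub_apply, @norm_add_sq ℂ, inner_smul_right, hP.inner_apply_apply_sub hAP,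
    mul_zero, norm_smul, Complex.norm_real, Real.norm_eq_abs, mul_pow, sq_abs]
  simp

lemma mul_norm_sq_le_re_inner_of_smul_le_sq {A P : E →L[ℂ] E} (hA : IsSelfAdjoint A)
    (hP : IsStarProjection P) (hAP : Commute A P) {μ c : ℝ} (hμ : 0 < μ) (hc : 0 < c)
    (hlow : ∀ y, P y = y → μ * ‖y‖ ^ 2 ≤ re ⟪A y, y⟫)
    (hsq : ∀ y, P y = y → c * re ⟪A y, y⟫ ≤ ‖A y‖ ^ 2)
    {y : E} (hy : P y = y) : c * ‖y‖ ^ 2 ≤ re ⟪A y, y⟫ := by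
  -- `B` is `A` on `range P` and `c` on `ker P`; it satisfies `B ≥ min μ c > 0` and `B² ≥ c B`,
  -- hence `B ≥ c` by the spectral theorem.
  set B : E →L[ℂ] E := A * P + c • (1 - P)
  have hB : IsSelfAdjoint B :=
    ((IsSelfAdjoint.commute_iff hA hP.isSelfAdjoint).mp hAP).add
      ((IsSelfAdjoint.all c).smul hP.one_sub.isSelfAdjoint)
  have hPP : ∀ x, P (P x) = P x := fun x => congr($(hP.isIdempotentElem.eq) x)
  have hBlow : algebraMap ℝ (E →L[ℂ] E) (min μ c) ≤ B := by
    refine (ContinuousLinearMap.algebraMap_le_iff hB _).mpr fun x => ?_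
    rw [hP.re_inner_mul_add_smul_one_sub_apply hAP, hP.norm_sq_eq_add x]
    nlinarith [hlow (P x) (hPP x), min_le_left μ c, min_le_right μ c, sq_nonneg ‖P x‖,
      sq_nonneg ‖x - P x‖]
  have hBsq : c • B ≤ B ^ 2 := by
    refine (ContinuousLinearMap.le_iff_re_inner_le
      ((hB.pow 2).sub ((IsSelfAdjoint.all c).smul hB))).mpr fun x => ?_
    have hsymm : ∀ u v, ⟪B u, v⟫ = ⟪u, B v⟫ := hB.isSymmetric
    rw [smul_apply, re_inner_real_smul_left, pow_two, mul_apply_eq_comp, hsymm (B x),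
      inner_self_eq_norm_sq, hP.re_inner_mul_add_smul_one_sub_apply hAP,
      hP.norm_mul_add_smul_one_sub_apply_sq hAP]
    nlinarith [hsq (P x) (hPP x), sq_nonneg ‖x - P x‖]
  have hcB := (ContinuousLinearMap.algebraMap_le_iff hB c).mp
    (algebraMap_le_of_smul_le_sq hB (lt_min hμ hc) hBlow hBsq) y
  rwa [hP.re_inner_mul_add_smul_one_sub_apply hAP, hy, sub_self, norm_zero, zero_pow two_ne_zero,
    mul_zero, add_zero] at hcB

end Hilbert

section Cayley

variable {G : Type*} [Group G] [DecidableEq G] {S : Finset G}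

lemma card_edgeSet_eq_sum_deg (S : Finset G) : #(edgeSet S) = ∑ s ∈ S, deg S s := by
  simp only [edgeSet, deg, Finset.card_filter, Finset.sum_product]

lemma card_edgeSet_eq_zero_iff : #(edgeSet S) = 0 ↔ ∀ s ∈ S, deg S s = 0 := by
  rw [card_edgeSet_eq_sum_deg, Finset.sum_eq_zero_iff]

lemma deg_inv (S : Finset G) (s : G) : deg S s⁻¹ = deg S s :=
  Finset.card_nbij' (s * ·) (s⁻¹ * ·) (fun _ hx => by simp_all) (fun _ hx => by simp_all)
    (fun _ _ => by simp) (fun _ _ => by simp)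

lemma two_le_deg_of_inv_eq (hone : (1 : G) ∉ S) {t : G} (ht : t ∈ S) (htinv : t⁻¹ = t)
    (hdeg : deg S t ≠ 0) : 2 ≤ deg S t := by
  obtain ⟨a, ha⟩ := Finset.card_pos.mp (Nat.pos_of_ne_zero hdeg)
  have hta : t * a ∈ S.filter (fun s' => t⁻¹ * s' ∈ S) := by
    have htt : t * t = 1 := by nth_rewrite 1 [← htinv]; exact inv_mul_cancel t
    rw [Finset.mem_filter, htinv] at ha ⊢
    rw [← mul_assoc, htt, one_mul]
    exact ⟨ha.2, ha.1⟩
  have hne : t * a ≠ a := fun h => hone (by rwa [mul_eq_right.mp h] at ht)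
  exact Finset.one_lt_card.mpr ⟨a, ha, t * a, hta, hne.symm⟩

lemma two_mul_le_sum_deg_mul (hsym : ∀ s ∈ S, s⁻¹ ∈ S) (hone : (1 : G) ∉ S) {g : G → ℝ}
    (hg : ∀ s ∈ S, 0 ≤ g s) {t : G} (ht : t ∈ S) (hginv : g t⁻¹ = g t) (hdeg : deg S t ≠ 0) :
    2 * g t ≤ ∑ s ∈ S, (deg S s : ℝ) * g s := by
  have hterm : ∀ s ∈ S, 0 ≤ (deg S s : ℝ) * g s := fun s hs => by have := hg s hs; positivity
  have h1 : (1 : ℝ) ≤ deg S t := by exact_mod_cast Nat.one_le_iff_ne_zero.mpr hdeg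
  by_cases htinv : t⁻¹ = t
  · have h2 : (2 : ℝ) ≤ deg S t := by exact_mod_cast two_le_deg_of_inv_eq hone ht htinv hdeg
    calc 2 * g t ≤ deg S t * g t := by nlinarith [hg t ht]
      _ ≤ _ := Finset.single_le_sum hterm ht
  · have hpair : ({t, t⁻¹} : Finset G) ⊆ S := Finset.insert_subset ht (by simpa using hsym t ht)
    calc 2 * g t ≤ 2 * (deg S t * g t) := by nlinarith [hg t ht]
      _ = ∑ s ∈ {t, t⁻¹}, (deg S s : ℝ) * g s := by
        rw [Finset.sum_pair (Ne.symm htinv), deg_inv, hginv]; ring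
      _ ≤ _ := Finset.sum_le_sum_of_subset_of_nonneg hpair fun s hs _ => hterm s hs

end Cayley

section AlmostRep

variable {G : Type*} [Group G]
  {H : Type*} [NormedAddCommGroup H] [InnerProductSpace ℂ H] [CompleteSpace H]
  {S : Finset G} {ε : ℝ} {π : G → H →L[ℂ] H}

lemma IsAlmostRep.inv_mul_self (hπ : IsAlmostRep S ε π) {s : G} (hs : s ∈ S) :
    π s⁻¹ * π s = 1 := by
  rw [hπ.2.1 s hs]; exact Unitary.star_mul_self_of_mem (hπ.1 s hs)

lemma IsAlmostRep.inv_apply_apply (hπ : IsAlmostRep S ε π) {s : G} (hs : s ∈ S) (y : H) :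
    π s⁻¹ (π s y) = y := by
  rw [← mul_apply_eq_comp, hπ.inv_mul_self hs, one_apply_eq_self]

lemma IsAlmostRep.norm_inv_apply_sub_self (hπ : IsAlmostRep S ε π) (hsym : ∀ s ∈ S, s⁻¹ ∈ S)
    {s : G} (hs : s ∈ S) (y : H) : ‖π s⁻¹ y - y‖ = ‖π s y - y‖ := by
  have h : π s⁻¹ y - y = π s⁻¹ (y - π s y) := by rw [map_sub, hπ.inv_apply_apply hs]
  rw [h, norm_map_of_mem_unitary (hπ.1 _ (hsym s hs)), norm_sub_rev]

lemma IsAlmostRep.star_sub_one_mul_self (hπ : IsAlmostRep S ε π) {s : G} (hs : s ∈ S) :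
    star (π s - 1) * (π s - 1) = -(π s - 1) - (π s⁻¹ - 1) := by
  rw [star_sub, star_one, ← hπ.2.1 s hs]
  calc (π s⁻¹ - 1) * (π s - 1) = π s⁻¹ * π s - π s⁻¹ - π s + 1 := by noncomm_ring
    _ = _ := by rw [hπ.inv_mul_self hs]; abel

end AlmostRep

section Laplacian

variable {G : Type*} [Group G] [DecidableEq G]
  {H : Type*} [NormedAddCommGroup H] [InnerProductSpace ℂ H]
  {S : Finset G} {ε : ℝ} {π : G → H →L[ℂ] H}

local notation "⟪" x ", " y "⟫" => inner ℂ x y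

noncomputable def laplacian (S : Finset G) (π : G → H →L[ℂ] H) : H →L[ℂ] H :=
  (-(2 / (#(edgeSet S) : ℂ))) • ∑ s ∈ S, (deg S s : ℂ) • (π s - 1)

lemma laplacian_apply (y : H) : laplacian S π y = d1star S (fun s => π s y - y) := by
  simp [laplacian, d1star]

lemma norm_laplacian_apply_le (y : H) :
    ‖laplacian S π y‖ ≤ 2 / #(edgeSet S) * ∑ s ∈ S, (deg S s : ℝ) * ‖π s y - y‖ := by
  rw [laplacian_apply, d1star, norm_smul]
  have h2 : ‖-(2 / (#(edgeSet S) : ℂ))‖ = 2 / #(edgeSet S) := by simp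
  rw [h2]
  gcongr
  refine (norm_sum_le _ _).trans_eq (Finset.sum_congr rfl fun s _ => ?_)
  simp [norm_smul]

lemma norm_laplacian_apply_lt (hT : #(edgeSet S) ≠ 0) {y : H} {r : ℝ}
    (hr : ∀ s ∈ S, ‖π s y - y‖ < r) : ‖laplacian S π y‖ < 2 * r := by
  obtain ⟨t, ht, hdeg⟩ : ∃ t ∈ S, deg S t ≠ 0 := by
    by_contra! h
    exact hT (card_edgeSet_eq_zero_iff.mpr h)
  have hsum : ∑ s ∈ S, (deg S s : ℝ) * ‖π s y - y‖ < ∑ s ∈ S, (deg S s : ℝ) * r :=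
    Finset.sum_lt_sum (fun s hs => by gcongr; exact (hr s hs).le)
      ⟨t, ht, by gcongr; exact hr t ht⟩
  have hTpos : (0 : ℝ) < #(edgeSet S) := by positivity
  calc ‖laplacian S π y‖ ≤ 2 / #(edgeSet S) * ∑ s ∈ S, (deg S s : ℝ) * ‖π s y - y‖ :=
        norm_laplacian_apply_le y
    _ < 2 / #(edgeSet S) * ∑ s ∈ S, (deg S s : ℝ) * r := by gcongr
    _ = 2 * r := by
      rw [← Finset.sum_mul, ← Nat.cast_sum, ← card_edgeSet_eq_sum_deg]
      field_simp

variable [CompleteSpace H]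

lemma IsAlmostRep.sum_deg_smul_star_mul_self (hπ : IsAlmostRep S ε π) (hsym : ∀ s ∈ S, s⁻¹ ∈ S) :
    ∑ s ∈ S, (deg S s : ℂ) • (star (π s - 1) * (π s - 1))
      = (-2 : ℂ) • ∑ s ∈ S, (deg S s : ℂ) • (π s - 1) := by
  have hreindex : ∑ s ∈ S, (deg S s : ℂ) • (π s⁻¹ - 1) = ∑ s ∈ S, (deg S s : ℂ) • (π s - 1) :=
    Finset.sum_nbij' (·⁻¹) (·⁻¹) (fun s hs => hsym s hs) (fun s hs => hsym s hs)
      (fun _ _ => inv_inv _) (fun _ _ => inv_inv _) (fun s _ => by rw [deg_inv])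
  rw [Finset.sum_congr rfl fun s hs => by rw [hπ.star_sub_one_mul_self hs, smul_sub, smul_neg],
    Finset.sum_sub_distrib, Finset.sum_neg_distrib, hreindex]
  module

lemma card_smul_laplacian (hπ : IsAlmostRep S ε π) (hsym : ∀ s ∈ S, s⁻¹ ∈ S)
    (hT : #(edgeSet S) ≠ 0) :
    (#(edgeSet S) : ℂ) • laplacian S π
      = ∑ s ∈ S, (deg S s : ℂ) • (star (π s - 1) * (π s - 1)) := by
  rw [hπ.sum_deg_smul_star_mul_self hsym, laplacian, smul_smul]
  congr 1
  field_simp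

lemma isSelfAdjoint_laplacian (hπ : IsAlmostRep S ε π) (hsym : ∀ s ∈ S, s⁻¹ ∈ S) :
    IsSelfAdjoint (laplacian S π) := by
  by_cases hT : #(edgeSet S) = 0
  · rw [laplacian, hT, Nat.cast_zero, div_zero, neg_zero, zero_smul]
    exact .zero _
  have hL : laplacian S π
      = (#(edgeSet S) : ℂ)⁻¹ • ∑ s ∈ S, (deg S s : ℂ) • (star (π s - 1) * (π s - 1)) := by
    rw [← card_smul_laplacian hπ hsym hT, inv_smul_smul₀ (by exact_mod_cast hT)]
  rw [hL]
  have h1 : IsSelfAdjoint ((#(edgeSet S) : ℂ)⁻¹) := (IsSelfAdjoint.natCast _).inv₀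
  have h2 : ∀ s ∈ S, IsSelfAdjoint ((deg S s : ℂ) • (star (π s - 1) * (π s - 1))) := fun s _ =>
    (IsSelfAdjoint.natCast _).smul (IsSelfAdjoint.star_mul_self _)
  exact h1.smul (isSelfAdjoint_sum _ h2)

lemma card_mul_inner_laplacian (hπ : IsAlmostRep S ε π) (hsym : ∀ s ∈ S, s⁻¹ ∈ S)
    (hT : #(edgeSet S) ≠ 0) (v y : H) :
    (#(edgeSet S) : ℂ) * ⟪v, laplacian S π y⟫
      = ∑ s ∈ S, (deg S s : ℂ) * ⟪π s v - v, π s y - y⟫ := by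
  rw [← inner_smul_right, ← smul_apply, card_smul_laplacian hπ hsym hT, _root_.sum_apply,
    inner_sum]
  refine Finset.sum_congr rfl fun s _ => ?_
  rw [smul_apply, inner_smul_right, mul_apply_eq_comp, star_eq_adjoint, adjoint_inner_right]
  simp only [sub_apply, one_apply_eq_self]

lemma card_mul_re_inner_laplacian_self (hπ : IsAlmostRep S ε π) (hsym : ∀ s ∈ S, s⁻¹ ∈ S)
    (hT : #(edgeSet S) ≠ 0) (y : H) :
    #(edgeSet S) * (⟪laplacian S π y, y⟫).re = ∑ s ∈ S, (deg S s : ℝ) * ‖π s y - y‖ ^ 2 := by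
  have h := congrArg Complex.re (card_mul_inner_laplacian hπ hsym hT y y)
  simp [Complex.re_sum, inner_self_eq_norm_sq_to_K, ← Complex.ofReal_pow] at h
  rw [← h, ← inner_conj_symm, Complex.conj_re]

end Laplacian

section Gap

variable {G : Type*} [Group G] [DecidableEq G]
  {H : Type*} [NormedAddCommGroup H] [InnerProductSpace ℂ H]
  {S : Finset G} {ε : ℝ} {π : G → H →L[ℂ] H} {P : H →L[ℂ] H} {c : ℝ}

local notation "⟪" x ", " y "⟫" => inner ℂ x y

/-- The hypothesis `⟨d₁d₁*f, f⟩ > c⟨f, f⟩` for nonzero `f ∈ B¹(δ²/|T|)`, with `B¹` modelled as the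
antisymmetric cochains approximated by `d₁ u`, `u ∈ range P`. -/
def IsGapOnB1 (S : Finset G) (π : G → H →L[ℂ] H) (P : H →L[ℂ] H) (c : ℝ) : Prop :=
  ∀ f : G → H, (∀ s ∈ S, f s⁻¹ = -(π s⁻¹ (f s))) →
    (∀ η : ℝ, 0 < η → ∃ u : H, P u = u ∧ ∑ s ∈ S, (deg S s : ℝ) * ‖f s - (π s u - u)‖ ^ 2 < η) →
    (∃ s ∈ S, f s ≠ 0) →
    c * ∑ s ∈ S, (deg S s : ℝ) * ‖f s‖ ^ 2
      < ∑ s ∈ S, (deg S s : ℝ) * (⟪π s (d1star S f) - d1star S f, f s⟫).re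

variable [CompleteSpace H]

lemma IsGapOnB1.apply_eq_self_of_deg_eq_zero (hgap : IsGapOnB1 S π P c)
    (hπ : IsAlmostRep S ε π) {t : G} (ht : t ∈ S) (hdeg : deg S t = 0) (x : H) : π t x = x := by
  by_contra hne
  -- `d₁ x` cut down to the vertices of degree zero: it has zero `C¹`-norm.
  set f : G → H := fun s => if deg S s = 0 then π s x - x else 0
  have hweight : ∀ s (φ : H → ℝ), φ 0 = 0 → (deg S s : ℝ) * φ (f s) = 0 := by
    intro s φ hφ
    by_cases h : deg S s = 0 <;> simp [f, h, hφ]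
  have hanti : ∀ s ∈ S, f s⁻¹ = -(π s⁻¹ (f s)) := by
    intro s hs
    by_cases h : deg S s = 0
    · simp only [f, deg_inv, h, if_true]
      rw [map_sub, hπ.inv_apply_apply hs]
      abel
    · simp [f, deg_inv, h]
  have happrox : ∀ η : ℝ, 0 < η → ∃ u : H, P u = u ∧
      ∑ s ∈ S, (deg S s : ℝ) * ‖f s - (π s u - u)‖ ^ 2 < η := fun η hη =>
    ⟨0, map_zero P, by
      simpa [Finset.sum_eq_zero fun s _ => hweight s (fun v => ‖v‖ ^ 2) (by simp)] using hη⟩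
  have key := hgap f hanti happrox ⟨t, ht, by simpa [f, hdeg] using sub_ne_zero.mpr hne⟩
  rw [Finset.sum_eq_zero fun s _ => hweight s (fun v => ‖v‖ ^ 2) (by simp),
    Finset.sum_eq_zero fun s _ =>
      hweight s (fun v => (⟪π s (d1star S f) - d1star S f, v⟫).re) (by simp)] at key
  simp at key

lemma IsGapOnB1.card_edgeSet_ne_zero (hgap : IsGapOnB1 S π P c) (hπ : IsAlmostRep S ε π)
    {t : G} (ht : t ∈ S) {x : H} (hx : π t x ≠ x) : #(edgeSet S) ≠ 0 := fun hT =>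
  hx (hgap.apply_eq_self_of_deg_eq_zero hπ ht (card_edgeSet_eq_zero_iff.mp hT t ht) x)

lemma IsGapOnB1.two_mul_norm_sq_le_sum_deg (hgap : IsGapOnB1 S π P c) (hπ : IsAlmostRep S ε π)
    (hsym : ∀ s ∈ S, s⁻¹ ∈ S) (hone : (1 : G) ∉ S) {t : G} (ht : t ∈ S) {x : H}
    (hx : π t x ≠ x) :
    2 * ‖π t x - x‖ ^ 2 ≤ ∑ s ∈ S, (deg S s : ℝ) * ‖π s x - x‖ ^ 2 :=
  two_mul_le_sum_deg_mul hsym hone (g := fun s => ‖π s x - x‖ ^ 2) (fun _ _ => by positivity) ht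
    (by rw [hπ.norm_inv_apply_sub_self hsym ht])
    (fun h => hx (hgap.apply_eq_self_of_deg_eq_zero hπ ht h x))

lemma IsGapOnB1.norm_apply_sub_lt_of_re_inner_laplacian_le (hgap : IsGapOnB1 S π P c)
    (hπ : IsAlmostRep S ε π) (hsym : ∀ s ∈ S, s⁻¹ ∈ S) (hone : (1 : G) ∉ S) {δ : ℝ}
    (hδ : 0 < δ) {x : H} (hx : x ≠ 0)
    (hlow : (⟪laplacian S π x, x⟫).re ≤ δ ^ 2 / #(edgeSet S) * ‖x‖ ^ 2) :
    ∀ s ∈ S, ‖π s x - x‖ < δ * ‖x‖ := by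
  by_contra! ⟨t, ht, hδt⟩
  have hne := ne_of_mul_norm_le_norm_sub hδ hx hδt
  have hT := hgap.card_edgeSet_ne_zero hπ ht hne
  have hTpos : (0 : ℝ) < #(edgeSet S) := by positivity
  rw [← mul_le_mul_iff_of_pos_left hTpos, card_mul_re_inner_laplacian_self hπ hsym hT] at hlow
  field_simp at hlow
  have henergy := hgap.two_mul_norm_sq_le_sum_deg hπ hsym hone ht hne
  have hpos : 0 < (δ * ‖x‖) ^ 2 := by positivity
  nlinarith [mul_pow δ ‖x‖ 2, pow_le_pow_left₀ (by positivity) hδt 2]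

lemma IsGapOnB1.mul_re_inner_laplacian_le (hgap : IsGapOnB1 S π P c) (hπ : IsAlmostRep S ε π)
    (hsym : ∀ s ∈ S, s⁻¹ ∈ S) (hT : #(edgeSet S) ≠ 0) {y : H} (hy : P y = y) :
    c * (⟪laplacian S π y, y⟫).re ≤ ‖laplacian S π y‖ ^ 2 := by
  by_cases hfix : ∀ s ∈ S, π s y = y
  · have h0 : laplacian S π y = 0 := by
      rw [laplacian_apply, d1star, Finset.sum_eq_zero fun s hs => by rw [hfix s hs, sub_self,
        smul_zero], smul_zero]
    simp [h0]
  push Not at hfix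
  have hanti : ∀ s ∈ S, π s⁻¹ y - y = -(π s⁻¹ (π s y - y)) := fun s hs => by
    rw [map_sub, hπ.inv_apply_apply hs]; abel
  have key := hgap (fun s => π s y - y) hanti (fun η hη => ⟨y, hy, by simpa using hη⟩)
    (by simpa [sub_eq_zero] using hfix)
  have hRHS := congrArg Complex.re (card_mul_inner_laplacian hπ hsym hT (laplacian S π y) y)
  have hnorm : (⟪laplacian S π y, laplacian S π y⟫).re = ‖laplacian S π y‖ ^ 2 :=
    inner_self_eq_norm_sq (𝕜 := ℂ) _
  simp only [Complex.re_sum, ← Complex.ofReal_natCast, Complex.re_ofReal_mul, hnorm] at hRHS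
  rw [← laplacian_apply, ← hRHS, ← card_mul_re_inner_laplacian_self hπ hsym hT] at key
  have hTpos : (0 : ℝ) < #(edgeSet S) := by positivity
  exact (lt_of_mul_lt_mul_left (by linarith) hTpos.le).le

end Gap

theorem stmt15_general {G : Type*} [Group G] [DecidableEq G]
    {H : Type*} [NormedAddCommGroup H] [InnerProductSpace ℂ H] [CompleteSpace H]
    (S : Finset G) (hS : S.Nonempty) (hsym : ∀ s ∈ S, s⁻¹ ∈ S) (hone : (1 : G) ∉ S)
    (ε : ℝ) (π : G → H →L[ℂ] H) (hπ : IsAlmostRep S ε π)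
    (c δ : ℝ) (hc : 0 < c) (hδ : 0 < δ)
    (P : H →L[ℂ] H) (hPidem : P.comp P = P) (hPsa : IsSelfAdjoint P)
    (hPcomm : ∀ u : H,
      P (d1star S (fun s => π s u - u)) = d1star S (fun s => π s (P u) - P u))
    (hPhigh : ∀ u : H, (δ ^ 2 / ((edgeSet S).card : ℝ)) * ‖P u‖ ^ 2
      ≤ (inner ℂ (d1star S (fun s => π s (P u) - P u)) (P u) : ℂ).re)
    (hPlow : ∀ u : H,
      (inner ℂ (d1star S (fun s => π s (u - P u) - (u - P u))) (u - P u) : ℂ).re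
        ≤ (δ ^ 2 / ((edgeSet S).card : ℝ)) * ‖u - P u‖ ^ 2)
    (hkey : ∀ f : G → H, (∀ s ∈ S, f s⁻¹ = -(π s⁻¹ (f s))) →
      (∀ η : ℝ, 0 < η → ∃ u : H, P u = u ∧
        ∑ s ∈ S, (deg S s : ℝ) * ‖f s - (π s u - u)‖ ^ 2 < η) →
      (∃ s ∈ S, f s ≠ 0) →
      c * ∑ s ∈ S, (deg S s : ℝ) * ‖f s‖ ^ 2
        < ∑ s ∈ S, (deg S s : ℝ) *
            (inner ℂ (π s (d1star S f) - d1star S f) (f s) : ℂ).re) :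
    (∃ u : H, u ≠ 0 ∧ ∀ s ∈ S, ‖π s u - u‖ < δ * ‖u‖) ∨
    (∀ u : H, ∃ s ∈ S, (c / 2) * ‖u‖ ≤ ‖π s u - u‖) := by
  have hgap : IsGapOnB1 S π P c := hkey
  by_contra! h
  obtain ⟨hmoved, u, hu⟩ := h
  have hu0 : u ≠ 0 := by
    rintro rfl
    obtain ⟨s, hs⟩ := hS
    simpa using hu s hs
  obtain ⟨t, ht, hδt⟩ := hmoved u hu0
  have hT := hgap.card_edgeSet_ne_zero hπ ht (ne_of_mul_norm_le_norm_sub hδ hu0 hδt)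
  have hPu : P u = u := by
    by_contra hne
    have hx : u - P u ≠ 0 := sub_ne_zero.mpr (Ne.symm hne)
    obtain ⟨s, hs, hδs⟩ := hmoved _ hx
    refine hδs.not_gt (hgap.norm_apply_sub_lt_of_re_inner_laplacian_le hπ hsym hone hδ hx ?_ s hs)
    simpa only [laplacian_apply] using hPlow u
  have hcomm : Commute (laplacian S π) P := ContinuousLinearMap.ext fun y => by
    simp only [mul_apply_eq_comp, laplacian_apply]
    exact (hPcomm y).symm
  have hlower : c * ‖u‖ ^ 2 ≤ (inner ℂ (laplacian S π u) u).re :=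
    mul_norm_sq_le_re_inner_of_smul_le_sq (isSelfAdjoint_laplacian hπ hsym) ⟨hPidem, hPsa⟩ hcomm
      (μ := δ ^ 2 / #(edgeSet S)) (by positivity) hc
      (fun y hy => by simpa [hy, laplacian_apply] using hPhigh y)
      (fun y hy => hgap.mul_re_inner_laplacian_le hπ hsym hT hy) hPu
  have hupper := hgap.mul_re_inner_laplacian_le hπ hsym hT hPu
  have hsmall : ‖laplacian S π u‖ < c * ‖u‖ := by
    linarith [norm_laplacian_apply_lt hT hu]
  nlinarith [mul_le_mul_of_nonneg_left hlower hc.le, norm_nonneg (laplacian S π u)]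

/-- The dichotomy of Proposition 2.6: if `⟨d₁d₁*f, f⟩_{C¹} > c⟨f,f⟩_{C¹}` for every nonzero
`f ∈ B¹(δ²/|T|)` (with `0 < δ < c/2`), then either there is a nonzero `δ`-almost-invariant
vector, or every vector satisfies `max_{s∈S} ‖π(s)u − u‖ ≥ (c/2)‖u‖`. -/
theorem stmt15 {G : Type*} [Group G] [DecidableEq G]
    {H : Type*} [NormedAddCommGroup H] [InnerProductSpace ℂ H] [CompleteSpace H]
    (S : Finset G) (hS : S.Nonempty) (hsym : ∀ s ∈ S, s⁻¹ ∈ S) (hone : (1 : G) ∉ S)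
    (ε : ℝ) (hε : 0 ≤ ε) (π : G → H →L[ℂ] H) (hπ : IsAlmostRep S ε π)
    (c δ : ℝ) (hc : 0 < c) (hδ : 0 < δ) (hδc : δ < c / 2)
    (P : H →L[ℂ] H) (hPidem : P.comp P = P) (hPsa : IsSelfAdjoint P)
    (hPcomm : ∀ u : H,
      P (d1star S (fun s => π s u - u)) = d1star S (fun s => π s (P u) - P u))
    (hPhigh : ∀ u : H, (δ ^ 2 / ((edgeSet S).card : ℝ)) * ‖P u‖ ^ 2
      ≤ (inner ℂ (d1star S (fun s => π s (P u) - P u)) (P u) : ℂ).re)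
    (hPlow : ∀ u : H,
      (inner ℂ (d1star S (fun s => π s (u - P u) - (u - P u))) (u - P u) : ℂ).re
        ≤ (δ ^ 2 / ((edgeSet S).card : ℝ)) * ‖u - P u‖ ^ 2)
    (hkey : ∀ f : G → H, (∀ s ∈ S, f s⁻¹ = -(π s⁻¹ (f s))) →
      (∀ η : ℝ, 0 < η → ∃ u : H, P u = u ∧
        ∑ s ∈ S, (deg S s : ℝ) * ‖f s - (π s u - u)‖ ^ 2 < η) →
      (∃ s ∈ S, f s ≠ 0) →
      c * ∑ s ∈ S, (deg S s : ℝ) * ‖f s‖ ^ 2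
        < ∑ s ∈ S, (deg S s : ℝ) *
            (inner ℂ (π s (d1star S f) - d1star S f) (f s) : ℂ).re) :
    (∃ u : H, u ≠ 0 ∧ ∀ s ∈ S, ‖π s u - u‖ < δ * ‖u‖) ∨
    (∀ u : H, ∃ s ∈ S, (c / 2) * ‖u‖ ≤ ‖π s u - u‖) :=
  stmt15_general S hS hsym hone ε π hπ c δ hc hδ P hPidem hPsa hPcomm hPhigh hPlow hkey
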